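/- arXiv:2212.08851 — 6 statements merged into one kernel-verified Lean document; each statement's English description precedes it below -/
import Mathlib

section
/- For all real ν > 0 and s > 0, the discrete Laplace transform of the falling factorial t^(ν-1) based at ν-1 equals Γ(ν)/s^ν; explicitly, ∑_{n=0}^∞ (1/(s+1))^(ν+n) · Γ(ν+n)/n! = Γ(ν)/s^ν, where the powers of 1/(s+1) and of s are real powers. -/
open scoped Real

open MeasureTheory Set

/-- For `ν > 0` and `s > 0`, the discrete Laplace transform based at `ν - 1` of the
falling factorial `t^(ν-1)` equals `Γ(ν)/s^ν`:
`∑_{n=0}^∞ (1/(s+1))^(ν+n) · Γ(ν+n)/n! = Γ(ν)/s^ν`, where powers with real exponents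
are real powers. -/
theorem laplace_falling_factorial (ν s : ℝ) (hν : 0 < ν) (hs : 0 < s) :
    ∑' n : ℕ, (1 / (s + 1)) ^ (ν + (n : ℝ)) * (Real.Gamma (ν + (n : ℝ)) / (Nat.factorial n : ℝ))
      = Real.Gamma ν / s ^ ν := by
  have hs1 : (0:ℝ) < s + 1 := by linarith
  set F : ℕ → ℝ → ℝ := fun n t => t ^ (ν + n - 1) * Real.exp (-((s + 1) * t)) / n.factorial
    with hF
  have hνn : ∀ n : ℕ, (0:ℝ) < ν + n := fun n => by positivity
  -- term value
  have hterm : ∀ n : ℕ, ∫ t in Ioi (0:ℝ), F n t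
      = (1 / (s + 1)) ^ (ν + (n : ℝ)) * (Real.Gamma (ν + (n : ℝ)) / n.factorial) := by
    intro n
    have := Real.integral_rpow_mul_exp_neg_mul_Ioi (hνn n) hs1
    simp only [hF]
    rw [integral_div, this]
    ring
  -- integrability
  have hint : ∀ n : ℕ, IntegrableOn (F n) (Ioi 0) := by
    intro n
    have h := integrableOn_rpow_mul_exp_neg_mul_rpow
      (show (-1:ℝ) < ν + n - 1 by have := hνn n; linarith) zero_lt_one hs1
    simp only [Real.rpow_one, neg_mul] at h
    have h2 : IntegrableOn (fun t : ℝ => t ^ (ν + n - 1) * Real.exp (-((s+1) * t))) (Ioi 0) := by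
      refine h.congr_fun (fun x _ => ?_) measurableSet_Ioi
      ring_nf
    simpa [hF, div_eq_mul_inv, IntegrableOn] using h2.mul_const ((n.factorial : ℝ)⁻¹)
  -- positivity of terms
  have hpos : ∀ n : ℕ, (0:ℝ) < (1 / (s + 1)) ^ (ν + (n : ℝ)) * (Real.Gamma (ν + (n : ℝ)) / n.factorial) := by
    intro n
    have h1 : (0:ℝ) < (1 / (s + 1)) ^ (ν + (n:ℝ)) := Real.rpow_pos_of_pos (by positivity) _
    have h2 : (0:ℝ) < Real.Gamma (ν + n) := Real.Gamma_pos_of_pos (hνn n)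
    positivity
  -- summability via ratio test
  have hsum : Summable fun n : ℕ =>
      (1 / (s + 1)) ^ (ν + (n : ℝ)) * (Real.Gamma (ν + (n : ℝ)) / n.factorial) := by
    refine summable_of_ratio_test_tendsto_lt_one
      (show 1 / (s+1) < 1 by rw [div_lt_one hs1]; linarith)
      (Filter.Eventually.of_forall fun n => (hpos n).ne') ?_
    have hratio : ∀ n : ℕ,
        ‖(1 / (s + 1)) ^ (ν + ((n:ℕ)+1 : ℕ) : ℝ) * (Real.Gamma (ν + ((n:ℕ)+1 : ℕ) : ℝ) / ((n+1).factorial : ℝ))‖ /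
        ‖(1 / (s + 1)) ^ (ν + (n : ℝ)) * (Real.Gamma (ν + (n : ℝ)) / n.factorial)‖
        = (1 / (s+1)) * ((ν - 1) / (n + 1) + 1) := by
      intro n
      rw [Real.norm_of_nonneg (hpos _).le, Real.norm_of_nonneg (hpos n).le]
      have e1 : (ν + ((n:ℕ)+1 : ℕ) : ℝ) = (ν + n) + 1 := by push_cast; ring
      rw [e1, Real.rpow_add (by positivity), Real.Gamma_add_one (hνn n).ne',
        Nat.factorial_succ, Real.rpow_one]
      have hg := (Real.Gamma_pos_of_pos (hνn n)).ne'
      have hr := (Real.rpow_pos_of_pos (show (0:ℝ) < 1/(s+1) by positivity) (ν + n)).ne'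
      have hfn : ((n.factorial : ℝ)) ≠ 0 := Nat.cast_ne_zero.mpr n.factorial_ne_zero
      push_cast
      field_simp
      ring
    simp only [hratio]
    have : Filter.Tendsto (fun n : ℕ => (1 / (s+1)) * ((ν - 1) / (n + 1) + 1))
        Filter.atTop (nhds (1/(s+1) * (0 + 1))) := by
      refine Filter.Tendsto.const_mul _ (Filter.Tendsto.add ?_ tendsto_const_nhds)
      have := tendsto_const_div_atTop_nhds_zero_nat (ν - 1)
      have h2 := this.comp (Filter.tendsto_add_atTop_nat 1)
      exact h2.congr fun n => by simp [Function.comp]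
    simpa using this
  -- swap sum and integral
  have hswap : ∑' n : ℕ, (∫ t in Ioi (0:ℝ), F n t) = ∫ t in Ioi (0:ℝ), ∑' n : ℕ, F n t := by
    refine MeasureTheory.integral_tsum_of_summable_integral_norm hint ?_
    have : ∀ n : ℕ, (∫ t in Ioi (0:ℝ), ‖F n t‖)
        = (1 / (s + 1)) ^ (ν + (n : ℝ)) * (Real.Gamma (ν + (n : ℝ)) / n.factorial) := by
      intro n
      rw [← hterm n]
      refine setIntegral_congr_fun measurableSet_Ioi (fun t ht => ?_)
      have ht' : (0:ℝ) < t := ht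
      rw [Real.norm_of_nonneg]
      positivity
    exact hsum.congr fun n => (this n).symm
  -- pointwise sum
  have hpt : ∀ t ∈ Ioi (0:ℝ), ∑' n : ℕ, F n t = t ^ (ν - 1) * Real.exp (-(s * t)) := by
    intro t ht
    have ht' : (0:ℝ) < t := ht
    have hFe : ∀ n : ℕ, F n t = (t ^ (ν - 1) * Real.exp (-((s+1) * t))) * (t ^ n / n.factorial) := by
      intro n
      simp only [hF]
      rw [show ν + (n:ℝ) - 1 = (ν - 1) + n by ring, Real.rpow_add ht',
        Real.rpow_natCast]
      ring
    simp only [hFe]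
    rw [tsum_mul_left]
    have hexp : ∑' n : ℕ, t ^ n / (n.factorial : ℝ) = Real.exp t := by
      rw [Real.exp_eq_exp_ℝ, NormedSpace.exp_eq_tsum ℝ]
      congr 1
      ext n
      rw [smul_eq_mul]
      ring
    rw [hexp, mul_assoc, ← Real.exp_add]
    congr 2
    ring
  -- finish
  calc ∑' n : ℕ, (1 / (s + 1)) ^ (ν + (n : ℝ)) * (Real.Gamma (ν + (n : ℝ)) / (n.factorial : ℝ))
      = ∑' n : ℕ, ∫ t in Ioi (0:ℝ), F n t := by simp_rw [hterm]
    _ = ∫ t in Ioi (0:ℝ), ∑' n : ℕ, F n t := hswap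
    _ = ∫ t in Ioi (0:ℝ), t ^ (ν - 1) * Real.exp (-(s * t)) :=
        setIntegral_congr_fun measurableSet_Ioi hpt
    _ = (1 / s) ^ ν * Real.Gamma ν := Real.integral_rpow_mul_exp_neg_mul_Ioi hν hs
    _ = Real.Gamma ν / s ^ ν := by
        rw [Real.div_rpow zero_le_one hs.le, Real.one_rpow]
        ring
end

section
/- Let α > 0, β > 0, n ∈ ℕ and λ be real with |λ| < 1. Then the series defining the two-parameter delta discrete Mittag-Leffler function at n converges; that is, the sequence k ↦ λ^k · Γ(n + kα + β)/(Γ(n+1) · Γ(kα + β)) is summable. -/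
lemma gamma_add_nat_le_aux (n : ℕ) (x : ℝ) (hx : 0 < x) :
    Real.Gamma ((n : ℝ) + x) ≤ Real.Gamma x * (x + n) ^ n := by
  induction n with
  | zero => simp
  | succ n ih =>
    have hnx : (0:ℝ) < (n:ℝ) + x := by positivity
    have h1 : Real.Gamma (((n:ℕ)+1 : ℕ) + x) = ((n:ℝ)+x) * Real.Gamma ((n:ℝ)+x) := by
      push_cast
      rw [show (n:ℝ) + 1 + x = ((n:ℝ) + x) + 1 by ring, Real.Gamma_add_one hnx.ne']
    rw [h1]
    have h2 : ((n:ℝ)+x) * Real.Gamma ((n:ℝ)+x) ≤ ((n:ℝ)+x) * (Real.Gamma x * (x+n)^n) :=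
      mul_le_mul_of_nonneg_left ih hnx.le
    refine h2.trans ?_
    push_cast
    have hΓ : (0:ℝ) ≤ Real.Gamma x := (Real.Gamma_pos_of_pos hx).le
    have h3 : (x+(n:ℝ))^n ≤ (x+(n:ℝ)+1)^n :=
      pow_le_pow_left₀ (by positivity) (by linarith) n
    calc ((n:ℝ)+x) * (Real.Gamma x * (x+(n:ℝ))^n)
        ≤ (x + (n:ℝ) + 1) * (Real.Gamma x * (x+(n:ℝ)+1)^n) :=
          mul_le_mul (by linarith) (mul_le_mul_of_nonneg_left h3 hΓ)
            (by positivity) (by linarith)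
      _ = Real.Gamma x * (x + ((n:ℝ)+1)) ^ (n+1) := by ring
/-- For `α > 0`, `β > 0`, `n ∈ ℕ` and `|λ| < 1`, the series defining the two-parameter
delta discrete Mittag-Leffler function at `n` converges: the sequence
`k ↦ λ^k · Γ(n + kα + β)/(Γ(n+1) · Γ(kα + β))` is summable. -/
theorem mittag_leffler_summable (α β lam : ℝ) (n : ℕ) (hα : 0 < α) (hβ : 0 < β)
    (hlam : |lam| < 1) :
    Summable fun k : ℕ =>
      lam ^ k * Real.Gamma ((n : ℝ) + (k : ℝ) * α + β) /
        (Real.Gamma ((n : ℝ) + 1) * Real.Gamma ((k : ℝ) * α + β)) := by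
  set r := |lam| with hrdef
  have hr : r < 1 := hlam
  have hr0 : 0 ≤ r := abs_nonneg _
  have hΓn : 0 < Real.Gamma ((n:ℝ)+1) := Real.Gamma_pos_of_pos (by positivity)
  set D : ℝ := (2*(α+β+n))^n with hD
  set C : ℝ := D / Real.Gamma ((n:ℝ)+1) with hC
  have hD0 : 0 ≤ D := by positivity
  have hC0 : 0 ≤ C := by positivity
  have hsum : Summable fun k : ℕ => C * ((k:ℝ)^n * r^k) + C * r^k := by
    have h1 : Summable fun k : ℕ => (k:ℝ)^n * r^k :=
      summable_pow_mul_geometric_of_norm_lt_one n (by rwa [Real.norm_eq_abs, abs_abs])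
    exact (h1.mul_left C).add ((summable_geometric_of_lt_one hr0 hr).mul_left C)
  apply Summable.of_abs
  apply hsum.of_nonneg_of_le (fun k => abs_nonneg _)
  intro k
  have hx0 : 0 < (k:ℝ)*α + β := by positivity
  set x : ℝ := (k:ℝ)*α + β with hx
  have hΓx : 0 < Real.Gamma x := Real.Gamma_pos_of_pos hx0
  have hΓnx : 0 < Real.Gamma ((n:ℝ) + x) := Real.Gamma_pos_of_pos (by positivity)
  have hrw : (n:ℝ) + (k:ℝ)*α + β = (n:ℝ) + x := by rw [hx]; ring
  have habs : |lam ^ k * Real.Gamma ((n:ℝ) + (k:ℝ)*α + β) / (Real.Gamma ((n:ℝ)+1) * Real.Gamma x)|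
      = r^k * (Real.Gamma ((n:ℝ) + x) / (Real.Gamma ((n:ℝ)+1) * Real.Gamma x)) := by
    rw [hrw, abs_div, abs_mul, abs_pow, abs_of_pos hΓnx, abs_of_pos (mul_pos hΓn hΓx),
      hrdef, mul_div_assoc]
  rw [habs]
  -- bound the Gamma quotient
  have hg : Real.Gamma ((n:ℝ) + x) ≤ Real.Gamma x * (x + n)^n := gamma_add_nat_le_aux n x hx0
  have hq : Real.Gamma ((n:ℝ) + x) / (Real.Gamma ((n:ℝ)+1) * Real.Gamma x)
      ≤ (x + n)^n / Real.Gamma ((n:ℝ)+1) := by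
    calc Real.Gamma ((n:ℝ) + x) / (Real.Gamma ((n:ℝ)+1) * Real.Gamma x)
        ≤ (Real.Gamma x * (x+n)^n) / (Real.Gamma ((n:ℝ)+1) * Real.Gamma x) := by gcongr
      _ = (x+n)^n / Real.Gamma ((n:ℝ)+1) := by
          field_simp
  -- bound (x+n)^n by D * (k^n + 1)
  have hm : max (k:ℝ) 1 ^ n ≤ (k:ℝ)^n + 1 := by
    rcases max_choice (k:ℝ) 1 with h | h <;> rw [h]
    · nlinarith [pow_nonneg (Nat.cast_nonneg (α := ℝ) k) n]
    · simp only [one_pow]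
      nlinarith [pow_nonneg (Nat.cast_nonneg (α := ℝ) k) n]
  have hxn : x + n ≤ 2*(α+β+n) * max (k:ℝ) 1 := by
    have h1 : (k:ℝ) ≤ max (k:ℝ) 1 := le_max_left _ _
    have h2 : (1:ℝ) ≤ max (k:ℝ) 1 := le_max_right _ _
    have hk0 : (0:ℝ) ≤ (k:ℝ) := Nat.cast_nonneg k
    have hn0 : (0:ℝ) ≤ (n:ℝ) := Nat.cast_nonneg n
    rw [hx]
    nlinarith
  have hpow : (x + n)^n ≤ D * ((k:ℝ)^n + 1) := by
    have h0 : (0:ℝ) ≤ x + n := by positivity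
    calc (x+n)^n ≤ (2*(α+β+n) * max (k:ℝ) 1)^n := pow_le_pow_left₀ h0 hxn n
      _ = D * (max (k:ℝ) 1)^n := by rw [hD, mul_pow]
      _ ≤ D * ((k:ℝ)^n + 1) := by gcongr
  calc r^k * (Real.Gamma ((n:ℝ) + x) / (Real.Gamma ((n:ℝ)+1) * Real.Gamma x))
      ≤ r^k * ((x + n)^n / Real.Gamma ((n:ℝ)+1)) := by
        gcongr
    _ ≤ r^k * (D * ((k:ℝ)^n + 1) / Real.Gamma ((n:ℝ)+1)) := by
        gcongr
    _ = C * ((k:ℝ)^n * r^k) + C * r^k := by rw [hC]; field_simp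
end

section
/- Let α > 0, β > 0, n ∈ ℕ and λ be real with |λ| > 1. Then the series defining the two-parameter delta discrete Mittag-Leffler function at n diverges; that is, the sequence k ↦ λ^k · Γ(n + kα + β)/(Γ(n+1) · Γ(kα + β)) is not summable. -/
lemma gamma_add_nat_aux (x : ℝ) (hx : 0 < x) (n : ℕ) :
    Real.Gamma (x + n) = (∏ i ∈ Finset.range n, (x + i)) * Real.Gamma x := by
  induction n with
  | zero => simp
  | succ m ih =>
      have h1 : x + (m + 1 : ℕ) = (x + m) + 1 := by push_cast; ring
      rw [h1, Real.Gamma_add_one (by positivity), ih, Finset.prod_range_succ]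
      ring

/-- For `α > 0`, `β > 0`, `n ∈ ℕ` and `|λ| > 1`, the series defining the two-parameter
delta discrete Mittag-Leffler function at `n` diverges: the sequence
`k ↦ λ^k · Γ(n + kα + β)/(Γ(n+1) · Γ(kα + β))` is not summable. -/
theorem mittag_leffler_not_summable (α β lam : ℝ) (n : ℕ) (hα : 0 < α) (hβ : 0 < β)
    (hlam : |lam| > 1) :
    ¬ Summable fun k : ℕ =>
      lam ^ k * Real.Gamma ((n : ℝ) + (k : ℝ) * α + β) /
        (Real.Gamma ((n : ℝ) + 1) * Real.Gamma ((k : ℝ) * α + β)) := by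
  intro hsum
  have h0 := hsum.tendsto_atTop_zero
  -- eventually |f k| < 1
  have hsmall : ∀ᶠ k : ℕ in Filter.atTop,
      |lam ^ k * Real.Gamma ((n : ℝ) + (k : ℝ) * α + β) /
        (Real.Gamma ((n : ℝ) + 1) * Real.Gamma ((k : ℝ) * α + β))| < 1 := by
    have := h0.abs
    rw [abs_zero] at this
    exact this.eventually_lt_const (by norm_num : (0:ℝ) < 1)
  -- eventually k*α + β ≥ 1
  have htend : Filter.Tendsto (fun k : ℕ => (k : ℝ) * α + β) Filter.atTop Filter.atTop := by
    apply Filter.Tendsto.atTop_add _ tendsto_const_nhds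
    exact (tendsto_natCast_atTop_atTop (R := ℝ)).atTop_mul_const hα
  have hx1 : ∀ᶠ k : ℕ in Filter.atTop, (1:ℝ) ≤ (k : ℝ) * α + β :=
    htend.eventually_ge_atTop 1
  -- eventually |lam|^k ≥ Γ(n+1)
  have hpow : Filter.Tendsto (fun k : ℕ => |lam| ^ k) Filter.atTop Filter.atTop :=
    tendsto_pow_atTop_atTop_of_one_lt hlam
  have hbig : ∀ᶠ k : ℕ in Filter.atTop, Real.Gamma ((n : ℝ) + 1) ≤ |lam| ^ k :=
    hpow.eventually_ge_atTop _
  obtain ⟨k, hk1, hk2, hk3⟩ := (hsmall.and (hx1.and hbig)).exists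
  set x : ℝ := (k : ℝ) * α + β with hxdef
  have hxpos : 0 < x := by positivity
  have hΓx : 0 < Real.Gamma x := Real.Gamma_pos_of_pos hxpos
  have hΓn : 0 < Real.Gamma ((n : ℝ) + 1) := Real.Gamma_pos_of_pos (by positivity)
  have hrw : (n : ℝ) + (k : ℝ) * α + β = x + n := by rw [hxdef]; ring
  have hprod1 : (1:ℝ) ≤ ∏ i ∈ Finset.range n, (x + i) := by
    calc (1:ℝ) = ∏ _i ∈ Finset.range n, (1:ℝ) := by simp
    _ ≤ ∏ i ∈ Finset.range n, (x + i) := by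
        refine Finset.prod_le_prod (fun i _ => by norm_num) fun i _ => ?_
        have : (0:ℝ) ≤ i := Nat.cast_nonneg i
        linarith [hk2]
  have hprodpos : (0:ℝ) < ∏ i ∈ Finset.range n, (x + i) := lt_of_lt_of_le one_pos hprod1
  have hval : |lam ^ k * Real.Gamma ((n : ℝ) + (k : ℝ) * α + β) /
      (Real.Gamma ((n : ℝ) + 1) * Real.Gamma x)| =
      |lam| ^ k * (∏ i ∈ Finset.range n, (x + i)) / Real.Gamma ((n : ℝ) + 1) := by
    rw [hrw, gamma_add_nat_aux x hxpos n]
    rw [abs_div, abs_mul, abs_pow, abs_mul, abs_mul,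
      abs_of_pos hprodpos, abs_of_pos hΓx, abs_of_pos hΓn]
    field_simp
  rw [hval] at hk1
  have : Real.Gamma ((n : ℝ) + 1) ≤ |lam| ^ k * ∏ i ∈ Finset.range n, (x + i) := by
    calc Real.Gamma ((n : ℝ) + 1) ≤ |lam| ^ k := hk3
    _ = |lam| ^ k * 1 := by ring
    _ ≤ |lam| ^ k * ∏ i ∈ Finset.range n, (x + i) := by
        apply mul_le_mul_of_nonneg_left hprod1 (by positivity)
  have : (1:ℝ) ≤ |lam| ^ k * (∏ i ∈ Finset.range n, (x + i)) / Real.Gamma ((n : ℝ) + 1) :=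
    (one_le_div hΓn).mpr this
  linarith
end

section
/- Let 0 < μ < 1 < ν < 2, let α be real with |α| < 1, and let s > 0 satisfy |α|·((s+1)/s)^(ν-μ) < 1. Then ∑_{n=0}^∞ (1/(s+1))^(ν-1+n) · e_{ν-μ, ν-1}(α, n) = s/(s^ν - α s^μ (s+1)^(ν-μ)), where all powers with real exponents are real powers. (The discrete Laplace transform based at ν-2 of t ↦ e_{ν-μ,ν-1}(α, t-ν+2) equals s/(s^ν - α s^μ (s+1)^(ν-μ)).) -/
/-- Two-parameter delta discrete Mittag-Leffler function at a nonnegative integer `n`: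
`e_{a,b}(λ, n) = ∑_{k=0}^∞ λ^k Γ(n + k a + b)/(Γ(n+1) Γ(k a + b))`. -/
noncomputable def mittagLeffler (a b lam : ℝ) (n : ℕ) : ℝ :=
  ∑' k : ℕ, lam ^ k * Real.Gamma ((n : ℝ) + (k : ℝ) * a + b) /
    (Real.Gamma ((n : ℝ) + 1) * Real.Gamma ((k : ℝ) * a + b))

open MeasureTheory Set

noncomputable def gR (c : ℝ) (n : ℕ) : ℝ :=
  Real.Gamma ((n : ℝ) + c) / (Real.Gamma ((n : ℝ) + 1) * Real.Gamma c)

lemma gR_pos {c : ℝ} (hc : 0 < c) (n : ℕ) : 0 < gR c n := by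
  have h1 : 0 < Real.Gamma ((n : ℝ) + c) := Real.Gamma_pos_of_pos (by positivity)
  have h2 : 0 < Real.Gamma ((n : ℝ) + 1) := Real.Gamma_pos_of_pos (by positivity)
  have h3 : 0 < Real.Gamma c := Real.Gamma_pos_of_pos hc
  exact div_pos h1 (mul_pos h2 h3)

lemma gR_zero {c : ℝ} (hc : 0 < c) : gR c 0 = 1 := by
  have h3 : Real.Gamma c ≠ 0 := (Real.Gamma_pos_of_pos hc).ne'
  simp [gR, Real.Gamma_one, div_self h3]

lemma gR_succ {c : ℝ} (hc : 0 < c) (n : ℕ) :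
    gR c (n + 1) = gR c n * (((n : ℝ) + c) / ((n : ℝ) + 1)) := by
  have hnc : ((n : ℝ) + c) ≠ 0 := by positivity
  have hn1 : ((n : ℝ) + 1) ≠ 0 := by positivity
  have hΓ1 : Real.Gamma ((n : ℝ) + 1) ≠ 0 := (Real.Gamma_pos_of_pos (by positivity)).ne'
  have hΓc : Real.Gamma c ≠ 0 := (Real.Gamma_pos_of_pos hc).ne'
  have e1 : ((n + 1 : ℕ) : ℝ) + c = ((n : ℝ) + c) + 1 := by push_cast; ring
  have e2 : ((n + 1 : ℕ) : ℝ) + 1 = ((n : ℝ) + 1) + 1 := by push_cast; ring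
  rw [gR, gR, e1, e2, Real.Gamma_add_one hnc, Real.Gamma_add_one hn1]
  field_simp

lemma gR_le {c : ℝ} (hc : 0 < c) : ∀ n : ℕ, gR c n ≤ ((n : ℝ) + 1) ^ c := by
  intro n
  induction n with
  | zero => simp [gR_zero hc, Real.one_rpow]
  | succ n ih =>
    have hn1 : (0:ℝ) < (n : ℝ) + 1 := by positivity
    have hstep : ((n : ℝ) + c) / ((n : ℝ) + 1) ≤ (((n : ℝ) + 2) / ((n : ℝ) + 1)) ^ c := by
      rcases le_total c 1 with h | h
      · have h1 : ((n : ℝ) + c) / ((n : ℝ) + 1) ≤ 1 := by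
          rw [div_le_one hn1]; linarith
        have h2 : (1 : ℝ) ≤ (((n : ℝ) + 2) / ((n : ℝ) + 1)) ^ c :=
          Real.one_le_rpow (by rw [le_div_iff₀ hn1]; linarith) hc.le
        linarith
      · have hs1 : (-1 : ℝ) ≤ 1 / ((n : ℝ) + 1) := by
          have : (0:ℝ) ≤ 1 / ((n : ℝ) + 1) := by positivity
          linarith
        have hb := one_add_mul_self_le_rpow_one_add hs1 h
        have e : (1 : ℝ) + 1 / ((n : ℝ) + 1) = ((n : ℝ) + 2) / ((n : ℝ) + 1) := by
          field_simp
          ring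
        rw [e] at hb
        have h3 : ((n : ℝ) + c) / ((n : ℝ) + 1) ≤ 1 + c * (1 / ((n : ℝ) + 1)) := by
          rw [div_le_iff₀ hn1]
          have : (1 + c * (1 / ((n : ℝ) + 1))) * ((n : ℝ) + 1) = (n : ℝ) + 1 + c := by
            field_simp
          rw [this]; linarith
        linarith
    have hdiv_nonneg : 0 ≤ ((n : ℝ) + c) / ((n : ℝ) + 1) := by positivity
    calc gR c (n + 1) = gR c n * (((n : ℝ) + c) / ((n : ℝ) + 1)) := gR_succ hc n
      _ ≤ ((n : ℝ) + 1) ^ c * ((((n : ℝ) + 2) / ((n : ℝ) + 1)) ^ c) :=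
          mul_le_mul ih hstep hdiv_nonneg (Real.rpow_nonneg hn1.le c)
      _ = (((n : ℝ) + 1) * (((n : ℝ) + 2) / ((n : ℝ) + 1))) ^ c :=
          (Real.mul_rpow hn1.le (by positivity)).symm
      _ = ((n : ℝ) + 2) ^ c := by
          congr 1; field_simp
      _ = (((n + 1 : ℕ) : ℝ) + 1) ^ c := by push_cast; ring_nf

lemma summable_aux (m : ℕ) {x : ℝ} (hx0 : 0 < x) (hx1 : x < 1) :
    Summable (fun n : ℕ => ((n : ℝ) + 1) ^ m * x ^ n) := by
  have h : Summable (fun n : ℕ => (n : ℝ) ^ m * x ^ n) :=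
    summable_pow_mul_geometric_of_norm_lt_one m (by rwa [Real.norm_eq_abs, abs_of_pos hx0])
  have h2 := (summable_nat_add_iff 1).2 h
  have h3 := h2.mul_left x⁻¹
  refine h3.congr fun n => ?_
  have hx : x ≠ 0 := hx0.ne'
  push_cast
  rw [pow_succ]
  field_simp

lemma summable_gR {c x : ℝ} (hc : 0 < c) (hx0 : 0 < x) (hx1 : x < 1) :
    Summable (fun n : ℕ => gR c n * x ^ n) := by
  refine Summable.of_nonneg_of_le (fun n => mul_nonneg (gR_pos hc n).le (pow_nonneg hx0.le n))
    (fun n => ?_) (summable_aux ⌈c⌉₊ hx0 hx1)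
  refine mul_le_mul_of_nonneg_right ?_ (pow_nonneg hx0.le n)
  calc gR c n ≤ ((n : ℝ) + 1) ^ c := gR_le hc n
    _ ≤ ((n : ℝ) + 1) ^ ((⌈c⌉₊ : ℕ) : ℝ) :=
        Real.rpow_le_rpow_of_exponent_le (by linarith [Nat.cast_nonneg (α := ℝ) n]) (Nat.le_ceil c)
    _ = ((n : ℝ) + 1) ^ (⌈c⌉₊ : ℕ) := Real.rpow_natCast _ _

lemma gR_hasSum {c x : ℝ} (hc : 0 < c) (hx0 : 0 < x) (hx1 : x < 1) :
    HasSum (fun n : ℕ => gR c n * x ^ n) ((1 - x) ^ (-c)) := by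
  have hsum := summable_gR hc hx0 hx1
  refine hsum.hasSum_iff.2 ?_
  have hΓc : (0:ℝ) < Real.Gamma c := Real.Gamma_pos_of_pos hc
  set f : ℕ → ℝ → ℝ :=
    fun n t => (x ^ n / (Nat.factorial n : ℝ)) * (t ^ ((n : ℝ) + c - 1) * Real.exp (-(1 * t))) with hf
  have hΓpos : ∀ n : ℕ, (0:ℝ) < (n : ℝ) + c := fun n => by positivity
  have hint : ∀ n, IntegrableOn (f n) (Ioi 0) := by
    intro n
    have h1 : IntegrableOn (fun t : ℝ => Real.exp (-t) * t ^ ((n : ℝ) + c - 1)) (Ioi 0) :=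
      Real.GammaIntegral_convergent (hΓpos n)
    have h2 := h1.const_mul (x ^ n / (Nat.factorial n : ℝ))
    exact MeasureTheory.IntegrableOn.congr_fun h2
      (fun t ht => by simp only [hf, one_mul]; ring) measurableSet_Ioi
  have hval : ∀ n, ∫ t in Ioi 0, f n t = Real.Gamma c * (gR c n * x ^ n) := by
    intro n
    rw [hf]
    simp only []
    rw [MeasureTheory.integral_const_mul,
      Real.integral_rpow_mul_exp_neg_mul_Ioi (hΓpos n) one_pos]
    have hfact : Real.Gamma ((n : ℝ) + 1) = (Nat.factorial n : ℝ) := Real.Gamma_nat_eq_factorial n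
    rw [gR, hfact]
    have hfne : ((Nat.factorial n : ℕ) : ℝ) ≠ 0 := by positivity
    rw [div_one, Real.one_rpow]
    field_simp
  have hnormval : ∀ n, (∫ t in Ioi 0, ‖f n t‖) = ∫ t in Ioi 0, f n t := by
    intro n
    refine setIntegral_congr_fun measurableSet_Ioi (fun t ht => ?_)
    have ht' : (0:ℝ) < t := ht
    rw [Real.norm_eq_abs, abs_of_nonneg]
    rw [hf]
    positivity
  have hsummable_int : Summable (fun n => ∫ t in Ioi 0, ‖f n t‖) := by
    refine (hsum.mul_left (Real.Gamma c)).congr fun n => ?_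
    rw [hnormval n, hval n]
  have key := MeasureTheory.integral_tsum_of_summable_integral_norm hint hsummable_int
  have hpt : ∀ t ∈ Ioi (0:ℝ), (∑' n, f n t) = t ^ (c - 1) * Real.exp (-((1 - x) * t)) := by
    intro t ht
    have ht' : (0:ℝ) < t := ht
    have h1 : ∀ n : ℕ, f n t = ((x * t) ^ n / (Nat.factorial n : ℝ)) * (t ^ (c - 1) * Real.exp (-t)) := by
      intro n
      rw [hf]
      simp only [one_mul]
      rw [show (n : ℝ) + c - 1 = (n : ℝ) + (c - 1) by ring, Real.rpow_add ht',
        Real.rpow_natCast, mul_pow]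
      ring
    calc (∑' n, f n t) = ∑' n : ℕ, ((x * t) ^ n / (Nat.factorial n : ℝ)) * (t ^ (c - 1) * Real.exp (-t)) :=
          tsum_congr h1
      _ = (∑' n : ℕ, (x * t) ^ n / (Nat.factorial n : ℝ)) * (t ^ (c - 1) * Real.exp (-t)) := tsum_mul_right
      _ = Real.exp (x * t) * (t ^ (c - 1) * Real.exp (-t)) := by
          rw [Real.exp_eq_exp_ℝ, NormedSpace.exp_eq_tsum_div]
      _ = t ^ (c - 1) * (Real.exp (x * t) * Real.exp (-t)) := by ring
      _ = t ^ (c - 1) * Real.exp (-((1 - x) * t)) := by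
          rw [← Real.exp_add]; ring_nf
  have hrhs : (∫ t in Ioi 0, (∑' n, f n t)) = (1 / (1 - x)) ^ c * Real.Gamma c := by
    rw [setIntegral_congr_fun measurableSet_Ioi hpt]
    exact Real.integral_rpow_mul_exp_neg_mul_Ioi hc (by linarith)
  have hchain : Real.Gamma c * (∑' n : ℕ, gR c n * x ^ n)
      = (1 / (1 - x)) ^ c * Real.Gamma c := by
    rw [← hrhs, ← key]
    rw [← tsum_mul_left]
    exact tsum_congr fun n => (hval n).symm
  have h1x : (0:ℝ) < 1 - x := by linarith
  have : (∑' n : ℕ, gR c n * x ^ n) = (1 / (1 - x)) ^ c :=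
    mul_left_cancel₀ hΓc.ne' (hchain.trans (mul_comm _ _))
  rw [this, one_div, Real.inv_rpow h1x.le, ← Real.rpow_neg h1x.le]

/-- For `0 < μ < 1 < ν < 2`, `|α| < 1` and `s > 0` with `|α|((s+1)/s)^(ν-μ) < 1`,
the discrete Laplace transform based at `ν - 2` of `t ↦ e_{ν-μ,ν-1}(α, t-ν+2)` equals
`s/(s^ν - α s^μ (s+1)^(ν-μ))`, where powers with real exponents are real powers. -/
theorem laplace_mittag_leffler_one (μ ν α s : ℝ)
    (hμ0 : 0 < μ) (hμν : μ < 1) (hν1 : 1 < ν) (hν2 : ν < 2)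
    (hα : |α| < 1) (hs : 0 < s) (hconv : |α| * ((s + 1) / s) ^ (ν - μ) < 1) :
    ∑' n : ℕ, (1 / (s + 1)) ^ (ν - 1 + (n : ℝ)) * mittagLeffler (ν - μ) (ν - 1) α n
      = s / (s ^ ν - α * s ^ μ * (s + 1) ^ (ν - μ)) := by
  have ha : 0 < ν - μ := by linarith
  have hb : 0 < ν - 1 := by linarith
  have hs1 : (0:ℝ) < s + 1 := by linarith
  set x : ℝ := 1 / (s + 1) with hxdef
  have hx0 : 0 < x := by positivity
  have hx1 : x < 1 := by rw [hxdef, div_lt_one hs1]; linarith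
  set y : ℝ := (s + 1) / s with hydef
  have hy0 : 0 < y := by positivity
  set q : ℝ := ((s + 1) / s) ^ (ν - μ) with hqdef
  have hq0 : 0 < q := Real.rpow_pos_of_pos (by positivity) _
  have hαq' : |α * q| < 1 := by
    rw [abs_mul, abs_of_pos hq0]; exact hconv
  have hc : ∀ k : ℕ, 0 < (k : ℝ) * (ν - μ) + (ν - 1) := fun k =>
    add_pos_of_nonneg_of_pos (mul_nonneg (Nat.cast_nonneg k) ha.le) hb
  have h1x : (1:ℝ) - x = y⁻¹ := by
    rw [hxdef, hydef, inv_div]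
    field_simp
    ring
  have hxy : x * y = 1 / s := by
    rw [hxdef, hydef]
    field_simp
  -- the general row lemma
  have hrowG : ∀ (β : ℝ) (k : ℕ),
      HasSum (fun n : ℕ => x ^ (ν - 1 + (n : ℝ)) *
        (β ^ k * Real.Gamma ((n : ℝ) + (k : ℝ) * (ν - μ) + (ν - 1)) /
          (Real.Gamma ((n : ℝ) + 1) * Real.Gamma ((k : ℝ) * (ν - μ) + (ν - 1)))))
        ((β * q) ^ k * s ^ (-(ν - 1))) := by
    intro β k
    have h := (gR_hasSum (hc k) hx0 hx1).mul_left (x ^ (ν - 1) * β ^ k)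
    have hfun : (fun n : ℕ => (x ^ (ν - 1) * β ^ k) * (gR ((k : ℝ) * (ν - μ) + (ν - 1)) n * x ^ n))
        = (fun n : ℕ => x ^ (ν - 1 + (n : ℝ)) *
            (β ^ k * Real.Gamma ((n : ℝ) + (k : ℝ) * (ν - μ) + (ν - 1)) /
              (Real.Gamma ((n : ℝ) + 1) * Real.Gamma ((k : ℝ) * (ν - μ) + (ν - 1))))) := by
      funext n
      rw [Real.rpow_add hx0, Real.rpow_natCast, gR,
        show (n : ℝ) + (k : ℝ) * (ν - μ) + (ν - 1) = (n : ℝ) + ((k : ℝ) * (ν - μ) + (ν - 1)) by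
          ring]
      ring
    rw [hfun] at h
    have hyck : ((1:ℝ) - x) ^ (-((k : ℝ) * (ν - μ) + (ν - 1))) = q ^ k * y ^ (ν - 1) := by
      rw [h1x, Real.inv_rpow hy0.le, ← Real.rpow_neg hy0.le, neg_neg, Real.rpow_add hy0,
        mul_comm ((k : ℝ)) (ν - μ), Real.rpow_mul hy0.le, Real.rpow_natCast]
    have hval : (x ^ (ν - 1) * β ^ k) * ((1 - x) ^ (-((k : ℝ) * (ν - μ) + (ν - 1))))
        = (β * q) ^ k * s ^ (-(ν - 1)) := by
      rw [hyck, mul_pow]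
      have hsx : x ^ (ν - 1) * y ^ (ν - 1) = s ^ (-(ν - 1)) := by
        rw [← Real.mul_rpow hx0.le hy0.le, hxy, one_div, Real.inv_rpow hs.le,
          ← Real.rpow_neg hs.le]
      calc (x ^ (ν - 1) * β ^ k) * (q ^ k * y ^ (ν - 1))
          = (β ^ k * q ^ k) * (x ^ (ν - 1) * y ^ (ν - 1)) := by ring
        _ = β ^ k * q ^ k * s ^ (-(ν - 1)) := by rw [hsx]
    rw [← hval]
    exact h
  set T : ℕ → ℕ → ℝ := fun k n => x ^ (ν - 1 + (n : ℝ)) *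
      (α ^ k * Real.Gamma ((n : ℝ) + (k : ℝ) * (ν - μ) + (ν - 1)) /
        (Real.Gamma ((n : ℝ) + 1) * Real.Gamma ((k : ℝ) * (ν - μ) + (ν - 1)))) with hT
  have habsT : ∀ k n, |T k n| = x ^ (ν - 1 + (n : ℝ)) *
      (|α| ^ k * Real.Gamma ((n : ℝ) + (k : ℝ) * (ν - μ) + (ν - 1)) /
        (Real.Gamma ((n : ℝ) + 1) * Real.Gamma ((k : ℝ) * (ν - μ) + (ν - 1)))) := by
    intro k n
    have g1 : 0 < Real.Gamma ((n : ℝ) + (k : ℝ) * (ν - μ) + (ν - 1)) :=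
      Real.Gamma_pos_of_pos (by
        have := hc k
        have hn : (0:ℝ) ≤ (n : ℝ) := Nat.cast_nonneg n
        linarith)
    have g2 : 0 < Real.Gamma ((n : ℝ) + 1) := Real.Gamma_pos_of_pos (by positivity)
    have g3 : 0 < Real.Gamma ((k : ℝ) * (ν - μ) + (ν - 1)) := Real.Gamma_pos_of_pos (hc k)
    rw [hT]
    rw [abs_mul, abs_of_nonneg (Real.rpow_nonneg hx0.le _), abs_div, abs_mul, abs_pow,
      abs_of_pos g1, abs_mul, abs_of_pos g2, abs_of_pos g3]
  have habs : Summable (fun p : ℕ × ℕ => |Function.uncurry T p|) := by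
    refine (summable_prod_of_nonneg (fun p => abs_nonneg _)).2 ⟨fun k => ?_, ?_⟩
    · exact ((hrowG (abs α) k).summable).congr (fun n => (habsT k n).symm)
    · have hcol : ∀ k : ℕ, (∑' n, |T k n|) = (|α| * q) ^ k * s ^ (-(ν - 1)) := by
        intro k
        rw [tsum_congr (habsT k)]
        exact (hrowG (abs α) k).tsum_eq
      have hgeo : Summable (fun k : ℕ => (|α| * q) ^ k * s ^ (-(ν - 1))) := by
        have h1 : ‖|α| * q‖ < 1 := by
          rw [Real.norm_eq_abs, abs_of_nonneg (mul_nonneg (abs_nonneg α) hq0.le)]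
          exact hconv
        exact ((hasSum_geometric_of_norm_lt_one h1).summable).mul_right _
      exact hgeo.congr (fun k => (hcol k).symm)
  have hU : Summable (Function.uncurry T) := summable_abs_iff.1 habs
  have hswap : (∑' n : ℕ, ∑' k : ℕ, T k n) = ∑' k : ℕ, ∑' n : ℕ, T k n :=
    Summable.tsum_comm' hU (fun k => (hrowG α k).summable) (fun n => hU.prod_symm.prod_factor n)
  have hL : ∀ n : ℕ, x ^ (ν - 1 + (n : ℝ)) * mittagLeffler (ν - μ) (ν - 1) α n
      = ∑' k : ℕ, T k n := fun n => (tsum_mul_left).symm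
  have hgeoval : (∑' k : ℕ, (α * q) ^ k) = (1 - α * q)⁻¹ :=
    (hasSum_geometric_of_abs_lt_one hαq').tsum_eq
  have hαq2 : α * q < 1 := lt_of_le_of_lt (le_abs_self _) hαq'
  have h1αq : (0:ℝ) < 1 - α * q := by linarith
  have hsν : (0:ℝ) < s ^ ν := Real.rpow_pos_of_pos hs ν
  have hden : s ^ ν - α * s ^ μ * (s + 1) ^ (ν - μ) = s ^ ν * (1 - α * q) := by
    rw [mul_sub, mul_one]
    congr 1
    have hq_eq : q = (s + 1) ^ (ν - μ) / s ^ (ν - μ) := by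
      rw [hqdef, Real.div_rpow hs1.le hs.le]
    have h1 : s ^ μ * s ^ (ν - μ) = s ^ ν := by
      rw [← Real.rpow_add hs]; congr 1; ring
    have hsa : (0:ℝ) < s ^ (ν - μ) := Real.rpow_pos_of_pos hs _
    rw [hq_eq]
    field_simp
    linear_combination α * h1
  calc (∑' n : ℕ, x ^ (ν - 1 + (n : ℝ)) * mittagLeffler (ν - μ) (ν - 1) α n)
      = ∑' n : ℕ, ∑' k : ℕ, T k n := tsum_congr hL
    _ = ∑' k : ℕ, ∑' n : ℕ, T k n := hswap
    _ = ∑' k : ℕ, ((α * q) ^ k * s ^ (-(ν - 1))) := tsum_congr fun k => (hrowG α k).tsum_eq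
    _ = (∑' k : ℕ, (α * q) ^ k) * s ^ (-(ν - 1)) := tsum_mul_right
    _ = (1 - α * q)⁻¹ * s ^ (-(ν - 1)) := by rw [hgeoval]
    _ = s / (s ^ ν - α * s ^ μ * (s + 1) ^ (ν - μ)) := by
        rw [hden, show -(ν - 1) = 1 - ν by ring, Real.rpow_sub hs, Real.rpow_one]
        field_simp
end

section
/- Let 0 < μ < 1 < ν < 2, let α be real with |α| < 1, and let s > 0 satisfy |α|·((s+1)/s)^(ν-μ) < 1. Then ∑_{n=0}^∞ (1/(s+1))^(ν-1+n) · e_{ν-μ, ν-μ}(α, n) = s^μ (s+1)^(1-μ)/(s^ν - α s^μ (s+1)^(ν-μ)), where all powers with real exponents are real powers. (The discrete Laplace transform based at ν-2 of t ↦ e_{ν-μ,ν-μ}(α, t-ν+2) equals s^μ (s+1)^(1-μ)/(s^ν - α s^μ (s+1)^(ν-μ)).) -/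
open Filter Topology

noncomputable def binCoef (c : ℝ) (n : ℕ) : ℝ :=
  Real.Gamma ((n : ℝ) + c) / (Real.Gamma ((n : ℝ) + 1) * Real.Gamma c)

lemma binCoef_pos {c : ℝ} (hc : 0 < c) (n : ℕ) : 0 < binCoef c n := by
  apply div_pos
  · exact Real.Gamma_pos_of_pos (by positivity)
  · exact mul_pos (Real.Gamma_pos_of_pos (by positivity)) (Real.Gamma_pos_of_pos hc)

lemma binCoef_zero {c : ℝ} (hc : 0 < c) : binCoef c 0 = 1 := by
  have h := (Real.Gamma_pos_of_pos hc).ne'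
  simp [binCoef, Real.Gamma_one, h]

lemma binCoef_succ {c : ℝ} (hc : 0 < c) (n : ℕ) :
    binCoef c (n + 1) * ((n : ℝ) + 1) = binCoef c n * ((n : ℝ) + c) := by
  have h1 : Real.Gamma (((n + 1 : ℕ) : ℝ) + c) = ((n : ℝ) + c) * Real.Gamma ((n : ℝ) + c) := by
    rw [show (((n + 1 : ℕ) : ℝ) + c) = ((n : ℝ) + c) + 1 by push_cast; ring]
    exact Real.Gamma_add_one (by positivity)
  have h2 : Real.Gamma (((n + 1 : ℕ) : ℝ) + 1) = ((n : ℝ) + 1) * Real.Gamma ((n : ℝ) + 1) := by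
    rw [show (((n + 1 : ℕ) : ℝ) + 1) = ((n : ℝ) + 1) + 1 by push_cast; ring]
    exact Real.Gamma_add_one (by positivity)
  have hΓ1 : Real.Gamma ((n : ℝ) + 1) ≠ 0 := (Real.Gamma_pos_of_pos (by positivity)).ne'
  have hΓc : Real.Gamma c ≠ 0 := (Real.Gamma_pos_of_pos hc).ne'
  have hn1 : ((n : ℝ) + 1) ≠ 0 := by positivity
  rw [binCoef, binCoef, h1, h2]
  field_simp

lemma tendsto_aux (d : ℝ) :
    Tendsto (fun n : ℕ => ((n : ℝ) + d) / ((n : ℝ) + 1)) atTop (𝓝 1) := by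
  have h0 : Tendsto (fun n : ℕ => 1 / ((n : ℝ) + 1)) atTop (𝓝 0) :=
    tendsto_one_div_add_atTop_nhds_zero_nat
  have h : Tendsto (fun n : ℕ => 1 + (d - 1) * (1 / ((n : ℝ) + 1))) atTop (𝓝 (1 + (d - 1) * 0)) :=
    tendsto_const_nhds.add (h0.const_mul (d - 1))
  simp only [mul_zero, add_zero] at h
  refine h.congr fun n => ?_
  have hn : ((n : ℝ) + 1) ≠ 0 := by positivity
  field_simp
  ring

lemma summable_binCoef_mul {c : ℝ} (hc : 0 < c) {r : ℝ} (hr0 : 0 < r) (hr1 : r < 1) :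
    Summable (fun n : ℕ => binCoef c n * ((n : ℝ) + 1) * r ^ n) := by
  set f : ℕ → ℝ := fun n => binCoef c n * ((n : ℝ) + 1) * r ^ n with hf
  have hfpos : ∀ n, 0 < f n := fun n => by
    have := binCoef_pos hc n
    positivity
  apply summable_of_ratio_test_tendsto_lt_one hr1
    (Eventually.of_forall fun n => (hfpos n).ne')
  have hratio : ∀ n : ℕ, ‖f (n + 1)‖ / ‖f n‖
      = (((n : ℝ) + c) / ((n : ℝ) + 1)) * ((((n : ℝ) + 2)) / ((n : ℝ) + 1)) * r := by
    intro n
    rw [Real.norm_eq_abs, Real.norm_eq_abs, abs_of_pos (hfpos _), abs_of_pos (hfpos _)]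
    have hrec := binCoef_succ hc n
    have hb := (binCoef_pos hc n).ne'
    have hb1 := (binCoef_pos hc (n + 1)).ne'
    have hn1 : ((n : ℝ) + 1) ≠ 0 := by positivity
    have hrn : r ^ n ≠ 0 := by positivity
    have hbc : binCoef c (n + 1) = binCoef c n * ((n : ℝ) + c) / ((n : ℝ) + 1) := by
      field_simp at hrec ⊢; linarith [hrec]
    rw [hf]
    simp only
    rw [hbc]
    push_cast
    field_simp
    ring
  have ht : Tendsto (fun n : ℕ => (((n : ℝ) + c) / ((n : ℝ) + 1)) * ((((n : ℝ) + 2)) / ((n : ℝ) + 1)) * r)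
      atTop (𝓝 (1 * 1 * r)) := ((tendsto_aux c).mul (tendsto_aux 2)).mul_const r
  rw [one_mul, one_mul] at ht
  exact ht.congr fun n => (hratio n).symm

lemma summable_binCoef {c : ℝ} (hc : 0 < c) {y : ℝ} (hy : |y| < 1) :
    Summable (fun n : ℕ => binCoef c n * y ^ n) := by
  set r : ℝ := (|y| + 1) / 2 with hr
  have hy0 : 0 ≤ |y| := abs_nonneg y
  have hr0 : 0 < r := by rw [hr]; positivity
  have hr1 : r < 1 := by rw [hr]; linarith
  have hyr : |y| ≤ r := by rw [hr]; linarith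
  apply Summable.of_abs
  apply Summable.of_nonneg_of_le (fun n => abs_nonneg _) _ (summable_binCoef_mul hc hr0 hr1)
  intro n
  have hb := binCoef_pos hc n
  rw [abs_mul, abs_of_pos hb, abs_pow]
  calc binCoef c n * |y| ^ n ≤ binCoef c n * r ^ n := by
        gcongr
    _ ≤ binCoef c n * ((n : ℝ) + 1) * r ^ n := by
        have h1 : (1 : ℝ) ≤ (n : ℝ) + 1 := by
          have := Nat.cast_nonneg (α := ℝ) n; linarith
        rw [mul_assoc]
        exact mul_le_mul_of_nonneg_left
          (le_mul_of_one_le_left (by positivity) h1) hb.le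

lemma hasSum_binomial {c : ℝ} (hc : 0 < c) {x : ℝ} (hx0 : 0 ≤ x) (hx1 : x < 1) :
    HasSum (fun n : ℕ => binCoef c n * x ^ n) ((1 - x) ^ (-c) : ℝ) := by
  set r : ℝ := (x + 1) / 2 with hrdef
  have hr0 : 0 < r := by rw [hrdef]; linarith
  have hr1 : r < 1 := by rw [hrdef]; linarith
  have hxr : x < r := by rw [hrdef]; linarith
  set t : Set ℝ := Set.Ioo (-r) r with htdef
  have hmemabs : ∀ y ∈ t, |y| < r := fun y hy => abs_lt.mpr ⟨hy.1, hy.2⟩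
  have h0t : (0 : ℝ) ∈ t := ⟨by linarith, hr0⟩
  have hxt : x ∈ t := ⟨by linarith, hxr⟩
  -- the series and its term-by-term derivative
  set F : ℝ → ℝ := fun y => ∑' n : ℕ, binCoef c n * y ^ n with hFdef
  set g : ℕ → ℝ → ℝ := fun n y => binCoef c n * y ^ n with hgdef
  set g' : ℕ → ℝ → ℝ := fun n y => binCoef c n * ((n : ℝ) * y ^ (n - 1)) with hg'def
  set u : ℕ → ℝ := fun n => binCoef c n * ((n : ℝ) + 1) * r ^ n / r with hudef
  have hu : Summable u := (summable_binCoef_mul hc hr0 hr1).div_const r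
  have hg : ∀ n y, y ∈ t → HasDerivAt (g n) (g' n y) y := fun n y _ =>
    (hasDerivAt_pow n y).const_mul (binCoef c n)
  have hbound : ∀ n y, y ∈ t → ‖g' n y‖ ≤ u n := by
    intro n y hy
    have hb := binCoef_pos hc n
    have hyr := (hmemabs y hy).le
    rw [hg'def]
    simp only [Real.norm_eq_abs, abs_mul, abs_of_pos hb, abs_pow, Nat.abs_cast]
    match n with
    | 0 => simp [hudef]; positivity
    | (m + 1) =>
      have h1 : |y| ^ m ≤ r ^ m := pow_le_pow_left₀ (abs_nonneg y) hyr m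
      have hun : u (m + 1) = binCoef c (m + 1) * (((m : ℝ) + 2) * r ^ m) := by
        rw [hudef]
        simp only
        rw [pow_succ]
        field_simp
        push_cast
        ring
      rw [hun]
      simp only [Nat.add_sub_cancel, Nat.cast_add, Nat.cast_one]
      have h2 : ((m : ℝ) + 1) ≤ (m : ℝ) + 2 := by linarith
      have hmn : (0:ℝ) ≤ (m : ℝ) + 1 := by positivity
      exact mul_le_mul_of_nonneg_left
        (mul_le_mul h2 h1 (by positivity) (by linarith)) hb.le
  have hg0 : Summable fun n => g n 0 := summable_binCoef hc (by simp)
  have hF : ∀ y ∈ t, HasDerivAt F (∑' n, g' n y) y := fun y hy =>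
    hasDerivAt_tsum_of_isPreconnected hu isOpen_Ioo (convex_Ioo _ _).isPreconnected
      hg hbound h0t hg0 hy
  -- the ODE : (1-y) * D y = c * F y on t
  have hODE : ∀ y ∈ t, (1 - y) * (∑' n, g' n y) = c * F y := by
    intro y hy
    have hylt : |y| < 1 := lt_trans (hmemabs y hy) hr1
    have hsum1 : Summable fun n => g' n y :=
      Summable.of_norm_bounded hu (fun n => hbound n y hy)
    set S : ℝ := ∑' n, g' n y with hSdef
    have hS : HasSum (fun n => g' n y) S := hsum1.hasSum
    have h1 : HasSum (fun m : ℕ => g' (m + 1) y) (S - ∑ i ∈ Finset.range 1, g' i y) :=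
      (hasSum_nat_add_iff' 1).mpr hS
    have hg'0 : g' 0 y = 0 := by simp [hg'def]
    rw [Finset.sum_range_one, hg'0, sub_zero] at h1
    have h2 : HasSum (fun m : ℕ => binCoef c m * (((m : ℝ) + c) * y ^ m)) S := by
      refine h1.congr_fun fun m => ?_
      have hrec := binCoef_succ hc m
      rw [hg'def]
      simp only [Nat.add_sub_cancel, Nat.cast_add, Nat.cast_one]
      rw [← mul_assoc, ← mul_assoc, hrec]
    have h3 : HasSum (fun m : ℕ => y * g' m y) (y * S) := hS.mul_left y
    have hFy : HasSum (fun m : ℕ => binCoef c m * y ^ m) (F y) :=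
      (summable_binCoef hc hylt).hasSum
    have h4 : HasSum (fun m : ℕ => c * (binCoef c m * y ^ m)) (c * F y) := hFy.mul_left c
    have hsplit : ∀ m : ℕ, binCoef c m * (((m : ℝ) + c) * y ^ m)
        = y * g' m y + c * (binCoef c m * y ^ m) := by
      intro m
      rw [hg'def]
      match m with
      | 0 => simp; ring
      | (k + 1) =>
        simp only [Nat.add_sub_cancel, Nat.cast_add, Nat.cast_one, pow_succ]
        ring
    have h5 : HasSum (fun m : ℕ => y * g' m y + c * (binCoef c m * y ^ m)) S :=
      h2.congr_fun fun m => (hsplit m).symm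
    have h6 := h3.add h4
    have := h5.unique h6
    linarith [this]
    -- S = y * S + c * F y
  -- G := F * (1-y)^c has zero derivative on t
  set G : ℝ → ℝ := fun y => F y * (1 - y) ^ c with hGdef
  have hGd : ∀ y ∈ t, HasDerivAt G 0 y := by
    intro y hy
    have h1y : (0 : ℝ) < 1 - y := by have := hy.2; simp only [htdef, Set.mem_Ioo] at hy; linarith [hy.2, hr1]
    have hd1 : HasDerivAt (fun z : ℝ => 1 - z) (-1) y := by
      simpa using (hasDerivAt_id y).const_sub 1
    have hd2 : HasDerivAt (fun z : ℝ => z ^ c) (c * (1 - y) ^ (c - 1)) (1 - y) :=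
      Real.hasDerivAt_rpow_const (Or.inl h1y.ne')
    have hd3 : HasDerivAt (fun z : ℝ => (1 - z) ^ c) (c * (1 - y) ^ (c - 1) * (-1)) y :=
      hd2.comp y hd1
    have hd4 := (hF y hy).mul hd3
    have hval : (∑' n, g' n y) * (1 - y) ^ c + F y * (c * (1 - y) ^ (c - 1) * (-1)) = 0 := by
      have he : (1 - y) ^ c = (1 - y) ^ (c - 1) * (1 - y) := by
        have h := Real.rpow_add h1y (c - 1) 1
        rw [Real.rpow_one, show c - 1 + 1 = c from by ring] at h
        exact h
      have hode := hODE y hy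
      rw [he]
      linear_combination ((1 - y) ^ (c - 1)) * hode
    rw [hval] at hd4
    exact hd4
  -- G is constant on t, G 0 = 1
  have hconst : G x = G 0 := by
    apply (convex_Ioo (-r) r).is_const_of_fderivWithin_eq_zero
      (fun y hy => (hGd y hy).differentiableAt.differentiableWithinAt)
      (fun y hy => ?_) hxt h0t
    have hfd : fderiv ℝ G y = 0 := by
      rw [(hGd y hy).hasFDerivAt.fderiv]
      ext z
      simp
    rw [fderivWithin_of_isOpen isOpen_Ioo hy, hfd]
  have hF0 : F 0 = 1 := by
    rw [hFdef]
    simp only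
    rw [tsum_eq_single 0 (fun n hn => by simp [zero_pow hn])]
    simp [binCoef_zero hc]
  have hG0 : G 0 = 1 := by rw [hGdef]; simp only; rw [hF0, sub_zero, Real.one_rpow, one_mul]
  have h1x : (0 : ℝ) < 1 - x := by linarith
  have hPc : (0 : ℝ) < (1 - x) ^ c := Real.rpow_pos_of_pos h1x c
  have hGx : F x * (1 - x) ^ c = 1 := by
    have h := hconst.trans hG0
    simpa [hGdef] using h
  have hFx : F x = (1 - x) ^ (-c) := by
    rw [Real.rpow_neg h1x.le]
    field_simp
    linarith [hGx]
  have hsum := (summable_binCoef hc (by rw [abs_of_nonneg hx0]; exact hx1)).hasSum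
  rw [show (∑' n : ℕ, binCoef c n * x ^ n) = F x from rfl, hFx] at hsum
  exact hsum

lemma final_alg (A1 A2 A3 A4 a : ℝ) (h1 : 0 < A1) (h2 : 0 < A2) (h3 : 0 < A3) (h4 : 0 < A4)
    (hD : 0 < A2 - a * (A3 * A4)) :
    A3⁻¹ * (A3 * A4 / A2) * (1 - a * (A3 * A4 / A2))⁻¹
      = A1 * A4 / (A1 * A2 - a * A1 * (A3 * A4)) := by
  have hB : (0:ℝ) < 1 - a * (A3 * A4 / A2) := by
    have h : 1 - a * (A3 * A4 / A2) = (A2 - a * (A3 * A4)) / A2 := by field_simp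
    rw [h]; positivity
  have hDne : A1 * A2 - a * A1 * (A3 * A4) ≠ 0 := by
    have h : A1 * A2 - a * A1 * (A3 * A4) = A1 * (A2 - a * (A3 * A4)) := by ring
    rw [h]; positivity
  field_simp [h1.ne', h2.ne', h3.ne', h4.ne', hB.ne', hDne]

/-- For `0 < μ < 1 < ν < 2`, `|α| < 1` and `s > 0` with `|α|((s+1)/s)^(ν-μ) < 1`,
the discrete Laplace transform based at `ν - 2` of `t ↦ e_{ν-μ,ν-μ}(α, t-ν+2)` equals
`s^μ (s+1)^(1-μ)/(s^ν - α s^μ (s+1)^(ν-μ))`, where powers with real exponents are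
real powers. -/
theorem laplace_mittag_leffler_three (μ ν α s : ℝ)
    (hμ0 : 0 < μ) (hμν : μ < 1) (hν1 : 1 < ν) (hν2 : ν < 2)
    (hα : |α| < 1) (hs : 0 < s) (hconv : |α| * ((s + 1) / s) ^ (ν - μ) < 1) :
    ∑' n : ℕ, (1 / (s + 1)) ^ (ν - 1 + (n : ℝ)) * mittagLeffler (ν - μ) (ν - μ) α n
      = s ^ μ * (s + 1) ^ (1 - μ) / (s ^ ν - α * s ^ μ * (s + 1) ^ (ν - μ)) := by
  set c : ℝ := ν - μ with hcdef
  have hc : 0 < c := by rw [hcdef]; linarith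
  have hs1 : (0 : ℝ) < s + 1 := by linarith
  set x : ℝ := 1 / (s + 1) with hxdef
  have hx0 : 0 < x := by rw [hxdef]; positivity
  have hx1 : x < 1 := by
    rw [hxdef, div_lt_one hs1]; linarith
  have h1x : 1 - x = s / (s + 1) := by
    rw [hxdef]; field_simp; ring
  have h1xpos : (0 : ℝ) < 1 - x := by linarith
  -- key rpow facts
  have hfrac : ∀ d : ℝ, (1 - x) ^ (-d) = ((s + 1) / s) ^ d := by
    intro d
    rw [h1x, Real.rpow_neg (by positivity), ← Real.inv_rpow (by positivity), inv_div]
  -- d_k := (k+1) * c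
  have hd : ∀ k : ℕ, (0 : ℝ) < ((k : ℝ) + 1) * c := fun k => by positivity
  -- the double family
  set f : ℕ → ℕ → ℝ := fun k n =>
    (x ^ (ν - 1) * α ^ k) * (binCoef (((k : ℝ) + 1) * c) n * x ^ n) with hfdef
  have hxν : (0 : ℝ) < x ^ (ν - 1) := Real.rpow_pos_of_pos hx0 _
  -- row sums
  have hrow : ∀ k : ℕ, HasSum (fun n => f k n)
      ((x ^ (ν - 1) * α ^ k) * (1 - x) ^ (-(((k : ℝ) + 1) * c))) := fun k =>
    (hasSum_binomial (hd k) hx0.le hx1).mul_left _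
  have hrowabs : ∀ k : ℕ, HasSum (fun n => |f k n|)
      ((x ^ (ν - 1) * |α| ^ k) * (1 - x) ^ (-(((k : ℝ) + 1) * c))) := by
    intro k
    have h := (hasSum_binomial (hd k) hx0.le hx1).mul_left (x ^ (ν - 1) * |α| ^ k)
    refine h.congr_fun fun n => ?_
    rw [hfdef]
    simp only
    rw [abs_mul, abs_mul, abs_mul, abs_pow, abs_pow,
      abs_of_pos hxν, abs_of_pos (binCoef_pos (hd k) n), abs_of_pos hx0]
  -- geometric data
  set q : ℝ := α * ((s + 1) / s) ^ c with hqdef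
  have hq : |q| < 1 := by
    rw [hqdef, abs_mul, abs_of_pos (Real.rpow_pos_of_pos (by positivity) c)]
    exact hconv
  have habsq : |α| * ((s + 1) / s) ^ c < 1 := hconv
  have hqabs : (0:ℝ) ≤ |α| * ((s + 1) / s) ^ c := by positivity
  -- rewriting (1-x)^(-(k+1)c)
  have hsplitpow : ∀ k : ℕ, (1 - x) ^ (-(((k : ℝ) + 1) * c))
      = ((1 - x) ^ (-c)) ^ k * (1 - x) ^ (-c) := by
    intro k
    rw [show -(((k : ℝ) + 1) * c) = (k : ℝ) * (-c) + (-c) by ring,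
      Real.rpow_add h1xpos, ← Real.rpow_natCast ((1 - x) ^ (-c)) k,
      ← Real.rpow_mul h1xpos.le]
    ring_nf
  -- summability of the double family
  have habs : Summable (fun p : ℕ × ℕ => |f p.1 p.2|) := by
    rw [summable_prod_of_nonneg (fun p => abs_nonneg _)]
    constructor
    · exact fun k => (hrowabs k).summable
    · apply Summable.congr _ (fun k => ((hrowabs k).tsum_eq).symm)
      apply Summable.congr
        (f := fun k : ℕ => (x ^ (ν - 1) * (1 - x) ^ (-c)) * (|α| * (1 - x) ^ (-c)) ^ k)
      · apply Summable.mul_left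
        apply summable_geometric_of_lt_one (by positivity)
        rw [hfrac c]; exact habsq
      · intro k
        rw [hsplitpow k, mul_pow]
        ring
  have hf : Summable (fun p : ℕ × ℕ => f p.1 p.2) := by
    rw [← summable_abs_iff]; exact habs
  -- swap
  have hswap : ∑' n : ℕ, ∑' k : ℕ, f k n = ∑' k : ℕ, ∑' n : ℕ, f k n :=
    Summable.tsum_comm' hf (fun k => (hrow k).summable) (fun n => (hf.prod_symm.prod_factor n).congr fun k => rfl)
  -- columns give the LHS
  have hcol : ∀ n : ℕ, x ^ (ν - 1 + (n : ℝ)) * mittagLeffler c c α n = ∑' k : ℕ, f k n := by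
    intro n
    rw [mittagLeffler, ← tsum_mul_left]
    congr 1
    funext k
    rw [hfdef]
    simp only
    rw [Real.rpow_add hx0, Real.rpow_natCast, binCoef,
      show (n : ℝ) + ((k : ℝ) + 1) * c = (n : ℝ) + (k : ℝ) * c + c from by ring,
      show ((k : ℝ) + 1) * c = (k : ℝ) * c + c from by ring]
    ring
  -- total sum via geometric series
  have htot : ∑' k : ℕ, ∑' n : ℕ, f k n
      = (x ^ (ν - 1) * (1 - x) ^ (-c)) * (1 - q)⁻¹ := by
    have hgeo : ∀ k : ℕ, x ^ (ν - 1) * α ^ k * (1 - x) ^ (-(((k : ℝ) + 1) * c))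
        = (x ^ (ν - 1) * (1 - x) ^ (-c)) * q ^ k := fun k => by
      rw [hsplitpow k, hqdef, hfrac c, mul_pow]; ring
    rw [tsum_congr (fun k => (hrow k).tsum_eq), tsum_congr hgeo]
    exact ((hasSum_geometric_of_abs_lt_one hq).mul_left _).tsum_eq
  have hLHS : ∑' n : ℕ, x ^ (ν - 1 + (n : ℝ)) * mittagLeffler c c α n
      = (x ^ (ν - 1) * (1 - x) ^ (-c)) * (1 - q)⁻¹ := by
    rw [tsum_congr hcol, hswap, htot]
  rw [hLHS]
  -- final algebra with rpow atoms
  have hA1 : (0:ℝ) < s ^ μ := Real.rpow_pos_of_pos hs _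
  have hA2 : (0:ℝ) < s ^ c := Real.rpow_pos_of_pos hs _
  have hA3 : (0:ℝ) < (s + 1) ^ (ν - 1) := Real.rpow_pos_of_pos hs1 _
  have hA4 : (0:ℝ) < (s + 1) ^ (1 - μ) := Real.rpow_pos_of_pos hs1 _
  have hA5 : (0:ℝ) < (s + 1) ^ c := Real.rpow_pos_of_pos hs1 _
  have ex : x ^ (ν - 1) = ((s + 1) ^ (ν - 1))⁻¹ := by
    rw [hxdef, one_div, ← Real.inv_rpow hs1.le]
  have efrac : ((s + 1) / s) ^ c = (s + 1) ^ c / s ^ c := Real.div_rpow hs1.le hs.le c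
  have eν : s ^ ν = s ^ μ * s ^ c := by
    rw [← Real.rpow_add hs]
    congr 1
    rw [hcdef]; ring
  have eA : (s + 1) ^ (ν - 1) * (s + 1) ^ (1 - μ) = (s + 1) ^ c := by
    rw [← Real.rpow_add hs1]
    congr 1
    rw [hcdef]; ring
  have hqlt : q < 1 := lt_of_le_of_lt (le_abs_self q) hq
  have hBpos : (0:ℝ) < 1 - q := by linarith
  have hqval : q = α * ((s + 1) ^ c / s ^ c) := by rw [hqdef, efrac]
  have hDpos : (0:ℝ) < s ^ c - α * (s + 1) ^ c := by
    have h : s ^ c - α * (s + 1) ^ c = s ^ c * (1 - q) := by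
      rw [hqval]; field_simp
    rw [h]; positivity
  rw [hfrac c, efrac, ex, eν, hqval, ← eA] at *
  rw [← eA] at hDpos
  exact final_alg _ _ _ _ α hA1 hA2 hA3 hA4 hDpos
end

section
/- Let 1 < ν < 2, s > 0, and let Y : ℕ → ℝ be bounded. Then the discrete Laplace transform of the ν-th Riemann–Liouville fractional difference of y satisfies ∑_{t=0}^∞ (1/(s+1))^(t+1) · (g_Y(t+2) - 2 g_Y(t+1) + g_Y(t)) = s^ν · ∑_{n=0}^∞ (1/(s+1))^(ν-1+n) Y(n) - s·Y(0) - ((1-ν)·Y(0) + Y(1)), where all powers with real exponents are real powers. -/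
/-- Generalized falling factorial `t^(ρ) = Γ(t+1)/Γ(t+1-ρ)` (equal to `0` when
`t+1-ρ` is a pole of `Γ`, by Mathlib's conventions). -/
noncomputable def ffact (t ρ : ℝ) : ℝ := Real.Gamma (t + 1) / Real.Gamma (t + 1 - ρ)

/-- The `(2-ν)`-th fractional sum of `y` (represented via `Y(n) = y(ν-2+n)`):
`g_Y(t) = (1/Γ(2-ν)) ∑_{j=0}^{t} (t+1-ν-j)^(1-ν) Y(j)`. -/
noncomputable def gY (ν : ℝ) (Y : ℕ → ℝ) (t : ℕ) : ℝ :=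
  (1 / Real.Gamma (2 - ν)) *
    ∑ j ∈ Finset.range (t + 1), ffact ((t : ℝ) + 1 - ν - (j : ℝ)) (1 - ν) * Y j

noncomputable def cc (ν : ℝ) (k : ℕ) : ℝ :=
  Real.Gamma ((k : ℝ) + 2 - ν) / (Real.Gamma (2 - ν) * k.factorial)

variable {ν : ℝ}

lemma cc_zero (hν2 : ν < 2) : cc ν 0 = 1 := by
  have h : (0 : ℝ) < 2 - ν := by linarith
  simp [cc, div_self (Real.Gamma_pos_of_pos h).ne']

lemma cc_rec (hν2 : ν < 2) (k : ℕ) :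
    ((k : ℝ) + 1) * cc ν (k + 1) = ((k : ℝ) + 2 - ν) * cc ν k := by
  have hk : (0:ℝ) < (k : ℝ) + 2 - ν := by
    have : (0:ℝ) ≤ k := Nat.cast_nonneg k
    linarith
  have hg : Real.Gamma ((k:ℝ) + 2 - ν + 1) = ((k:ℝ) + 2 - ν) * Real.Gamma ((k:ℝ) + 2 - ν) :=
    Real.Gamma_add_one hk.ne'
  have hcast : ((k + 1 : ℕ) : ℝ) + 2 - ν = (k:ℝ) + 2 - ν + 1 := by push_cast; ring
  have hfac : ((k+1).factorial : ℝ) = ((k:ℝ)+1) * k.factorial := by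
    rw [Nat.factorial_succ]; push_cast; ring
  rw [cc, cc, hcast, hg, hfac]
  have h2 : (0:ℝ) < Real.Gamma (2 - ν) := Real.Gamma_pos_of_pos (by linarith)
  have hf : (0:ℝ) < (k.factorial : ℝ) := by positivity
  field_simp

lemma cc_pos (hν2 : ν < 2) (k : ℕ) : 0 < cc ν k := by
  have h1 : (0:ℝ) < (k:ℝ) + 2 - ν := by
    have : (0:ℝ) ≤ k := Nat.cast_nonneg k
    linarith
  exact div_pos (Real.Gamma_pos_of_pos h1)
    (mul_pos (Real.Gamma_pos_of_pos (by linarith)) (by positivity))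

lemma cc_le_one (hν1 : 1 < ν) (hν2 : ν < 2) (k : ℕ) : cc ν k ≤ 1 := by
  induction k with
  | zero => rw [cc_zero hν2]
  | succ k ih =>
    have hk1 : (0:ℝ) < (k:ℝ) + 1 := by positivity
    have h := cc_rec (ν := ν) hν2 k
    have : cc ν (k+1) = (((k:ℝ) + 2 - ν) / ((k:ℝ)+1)) * cc ν k := by
      field_simp; linarith [h]
    rw [this]
    have hle : ((k:ℝ) + 2 - ν) / ((k:ℝ)+1) ≤ 1 := by
      rw [div_le_one hk1]; linarith
    have := cc_pos (ν := ν) hν2 k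
    calc (((k:ℝ) + 2 - ν) / ((k:ℝ)+1)) * cc ν k ≤ 1 * cc ν k := by
          apply mul_le_mul_of_nonneg_right hle this.le
      _ ≤ 1 := by simpa using ih

lemma hasSum_cc {ν : ℝ} (hν1 : 1 < ν) (hν2 : ν < 2) {r : ℝ} (hr0 : 0 ≤ r) (hr1 : r < 1) :
    HasSum (fun k => cc ν k * r ^ k) ((1 - r) ^ (ν - 2 : ℝ)) := by
  set b : ℝ := (1 + r) / 2 with hb
  have hrb : r < b := by rw [hb]; linarith
  have hb0 : 0 < b := by rw [hb]; linarith
  have hb1 : b < 1 := by rw [hb]; linarith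
  set t : Set ℝ := Set.Ioo (-b) b with ht
  set F : ℝ → ℝ := fun x => ∑' n : ℕ, cc ν n * x ^ n with hF
  set D : ℝ → ℝ := fun x => ∑' n : ℕ, cc ν n * ((n : ℝ) * x ^ (n - 1)) with hD
  set u : ℕ → ℝ := fun n => (n : ℝ) * b ^ (n - 1) with hu
  have hu_summ : Summable u := by
    rw [← summable_nat_add_iff 1]
    have h1 : Summable (fun n : ℕ => ((n : ℝ) + 1) * b ^ n) := by
      have := summable_pow_mul_geometric_of_norm_lt_one (R := ℝ) 1
        (r := b) (by rw [Real.norm_eq_abs, abs_of_pos hb0]; exact hb1)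
      simpa [add_mul, one_mul, pow_one] using this.add (summable_geometric_of_lt_one hb0.le hb1)
    refine h1.congr fun n => ?_
    simp [hu]
  -- derivative bound
  have habs : ∀ y ∈ t, |y| ≤ b := by
    intro y hy
    rw [abs_le]
    exact ⟨(Set.mem_Ioo.1 hy).1.le, (Set.mem_Ioo.1 hy).2.le⟩
  have hbound : ∀ (n : ℕ) (y : ℝ), y ∈ t →
      ‖cc ν n * ((n : ℝ) * y ^ (n - 1))‖ ≤ u n := by
    intro n y hy
    rw [Real.norm_eq_abs, abs_mul, abs_mul, abs_pow]
    have h1 : |cc ν n| ≤ 1 := by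
      rw [abs_of_pos (cc_pos hν2 n)]; exact cc_le_one hν1 hν2 n
    have h2 : |y| ^ (n-1) ≤ b ^ (n-1) := pow_le_pow_left₀ (abs_nonneg y) (habs y hy) _
    calc |cc ν n| * (|(n:ℝ)| * |y| ^ (n-1)) ≤ 1 * (|(n:ℝ)| * b ^ (n-1)) := by
          apply mul_le_mul h1 (by exact mul_le_mul_of_nonneg_left h2 (abs_nonneg _)) (by positivity) one_pos.le
      _ = u n := by rw [hu]; simp [Nat.abs_cast]
  have hg : ∀ (n : ℕ) (y : ℝ), y ∈ t →
      HasDerivAt (fun x : ℝ => cc ν n * x ^ n) (cc ν n * ((n : ℝ) * y ^ (n - 1))) y :=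
    fun n y _ => (hasDerivAt_pow n y).const_mul (cc ν n)
  have hg0 : Summable fun n : ℕ => cc ν n * (0 : ℝ) ^ n := by
    apply summable_of_ne_finset_zero (s := {0})
    intro n hn
    have : n ≠ 0 := by simpa using hn
    simp [zero_pow this]
  have h0t : (0 : ℝ) ∈ t := Set.mem_Ioo.2 ⟨by linarith, hb0⟩
  have hderivF : ∀ y ∈ t, HasDerivAt F (D y) y := by
    intro y hy
    exact hasDerivAt_tsum_of_isPreconnected hu_summ isOpen_Ioo (Convex.isPreconnected (convex_Ioo _ _))
      hg hbound h0t hg0 hy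
  -- summability of terms
  have hsummF : ∀ y ∈ t, Summable fun n : ℕ => cc ν n * y ^ n := by
    intro y hy
    apply Summable.of_norm_bounded (summable_geometric_of_lt_one hb0.le hb1)
    intro n
    rw [Real.norm_eq_abs, abs_mul, abs_pow]
    calc |cc ν n| * |y| ^ n ≤ 1 * b ^ n := by
          apply mul_le_mul (by rw [abs_of_pos (cc_pos hν2 n)]; exact cc_le_one hν1 hν2 n)
            (pow_le_pow_left₀ (abs_nonneg y) (habs y hy) n) (by positivity) one_pos.le
      _ = b ^ n := one_mul _
  have hsummD : ∀ y ∈ t, Summable fun n : ℕ => cc ν n * ((n:ℝ) * y ^ (n-1)) := by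
    intro y hy
    exact Summable.of_norm_bounded hu_summ fun n => hbound n y hy
  -- the ODE: (1-y) * D y = (2-ν) * F y
  have hODE : ∀ y ∈ t, (1 - y) * D y = (2 - ν) * F y := by
    intro y hy
    have hs := hsummD y hy
    have hs' : Summable fun n : ℕ => cc ν (n+1) * (((n:ℝ)+1) * y ^ n) := by
      refine ((summable_nat_add_iff 1).2 hs).congr fun n => ?_
      simp
    have hs'' : Summable fun n : ℕ => cc ν n * ((n:ℝ) * y ^ n) := by
      refine hs.mul_left y |>.congr fun n => ?_
      cases n with
      | zero => simp
      | succ m => simp [pow_succ]; ring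
    have hshift : D y = ∑' n : ℕ, cc ν (n+1) * (((n:ℝ)+1) * y ^ n) := by
      simp only [hD]
      rw [Summable.tsum_eq_zero_add hs]
      simp
    have hyD : y * D y = ∑' n : ℕ, cc ν n * ((n:ℝ) * y ^ n) := by
      simp only [hD, ← tsum_mul_left]
      congr 1
      funext n
      cases n with
      | zero => simp
      | succ m => simp [pow_succ]; ring
    have hsplit : (1 - y) * D y = D y - y * D y := by ring
    rw [hsplit, hyD, hshift, ← Summable.tsum_sub hs' hs'']
    simp only [hF, ← tsum_mul_left]
    congr 1
    funext n
    have hrec := cc_rec (ν := ν) hν2 n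
    have h : cc ν (n+1) * (((n:ℝ)+1) * y^n) - cc ν n * ((n:ℝ) * y^n)
        = (((n:ℝ)+1) * cc ν (n+1) - (n:ℝ) * cc ν n) * y^n := by ring
    rw [h, hrec]
    ring
  -- φ := (1-x)^(2-ν) * F x is constant on [0,r]
  set φ : ℝ → ℝ := fun x => (1 - x) ^ ((2:ℝ) - ν) * F x with hφ
  have hsub : Set.Icc (0:ℝ) r ⊆ t := by
    intro x hx
    exact Set.mem_Ioo.2 ⟨by linarith [hx.1], lt_of_le_of_lt hx.2 hrb⟩
  have hderivφ : ∀ x ∈ Set.Icc (0:ℝ) r, HasDerivAt φ 0 x := by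
    intro x hx
    have hx1 : 0 < 1 - x := by
      have := hx.2
      linarith
    have hbase : HasDerivAt (fun z : ℝ => 1 - z) (-1) x := by
      simpa using (hasDerivAt_id x).const_sub 1
    have h1 : HasDerivAt (fun z : ℝ => (1 - z) ^ ((2:ℝ) - ν))
        (((2:ℝ) - ν) * (1 - x) ^ ((2:ℝ) - ν - 1) * (-1)) x :=
      (Real.hasDerivAt_rpow_const (p := (2:ℝ) - ν) (Or.inl hx1.ne')).comp x hbase
    have h2 := h1.mul (hderivF x (hsub hx))
    rw [hφ]
    refine h2.congr_deriv ?_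
    have hO := hODE x (hsub hx)
    have e1 : ((2:ℝ) - ν - 1) = (1:ℝ) - ν := by ring
    have e2 : (1 - x) ^ ((2:ℝ) - ν) = (1 - x) ^ ((1:ℝ) - ν) * (1 - x) := by
      rw [show ((2:ℝ) - ν) = ((1:ℝ) - ν) + 1 by ring, Real.rpow_add hx1, Real.rpow_one]
    rw [e1, e2]
    linear_combination ((1 - x) ^ ((1:ℝ) - ν)) * hO
  have hcont : ContinuousOn φ (Set.Icc 0 r) := fun x hx =>
    (hderivφ x hx).continuousAt.continuousWithinAt
  have hre : φ r = φ 0 :=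
    constant_of_has_deriv_right_zero hcont
      (fun x hx => (hderivφ x (Set.mem_Icc_of_Ico hx)).hasDerivWithinAt)
      r (Set.mem_Icc.2 ⟨hr0, le_refl r⟩)
  have hF0 : F 0 = 1 := by
    simp only [hF]
    rw [tsum_eq_single 0 (fun n hn => by simp [zero_pow hn])]
    simp [cc_zero hν2]
  have hφr : (1 - r) ^ ((2:ℝ) - ν) * F r = 1 := by
    simpa [hφ, hF0, Real.one_rpow] using hre
  have hr1' : (0:ℝ) < 1 - r := by linarith
  have hFr : F r = (1 - r) ^ (ν - 2 : ℝ) := by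
    have h3 : F r = ((1 - r) ^ ((2:ℝ) - ν))⁻¹ := eq_inv_of_mul_eq_one_left
      (by linarith [hφr] : F r * (1 - r) ^ ((2:ℝ) - ν) = 1)
    rw [h3, ← Real.rpow_neg hr1'.le]
    norm_num
  have hrt : r ∈ t := Set.mem_Ioo.2 ⟨by linarith, hrb⟩
  have := (hsummF r hrt).hasSum
  rwa [show (∑' n : ℕ, cc ν n * r ^ n) = F r from rfl, hFr] at this

lemma gY_eq_conv {ν : ℝ} (Y : ℕ → ℝ) (t : ℕ) :
    gY ν Y t = ∑ j ∈ Finset.range (t + 1), cc ν (t - j) * Y j := by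
  rw [gY, Finset.mul_sum]
  refine Finset.sum_congr rfl fun j hj => ?_
  have hjt : j ≤ t := Nat.lt_succ_iff.1 (Finset.mem_range.1 hj)
  have hcast : (t:ℝ) + 1 - ν - (j:ℝ) = ((t - j : ℕ) : ℝ) + 1 - ν := by
    push_cast [Nat.cast_sub hjt]; ring
  rw [ffact, hcast]
  have e1 : ((t - j : ℕ) : ℝ) + 1 - ν + 1 = ((t - j : ℕ) : ℝ) + 2 - ν := by ring
  have e2 : ((t - j : ℕ) : ℝ) + 2 - ν - (1 - ν) = ((t - j : ℕ) : ℝ) + 1 := by ring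
  rw [e1, e2, Real.Gamma_nat_eq_factorial, cc]
  ring

/-- For `1 < ν < 2`, `s > 0` and bounded `Y`, the discrete Laplace transform of the
`ν`-th Riemann–Liouville fractional difference `Δ^ν y(t) = g_Y(t+2) - 2g_Y(t+1) + g_Y(t)`
satisfies
`∑_{t=0}^∞ (1/(s+1))^(t+1) (g_Y(t+2) - 2g_Y(t+1) + g_Y(t))
  = s^ν ∑_{n=0}^∞ (1/(s+1))^(ν-1+n) Y(n) - s Y(0) - ((1-ν) Y(0) + Y(1))`. -/
theorem laplace_fractional_difference (ν s : ℝ) (hν1 : 1 < ν) (hν2 : ν < 2) (hs : 0 < s)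
    (Y : ℕ → ℝ) (hY : ∃ M : ℝ, ∀ n : ℕ, |Y n| ≤ M) :
    ∑' t : ℕ, (1 / (s + 1)) ^ (t + 1) * (gY ν Y (t + 2) - 2 * gY ν Y (t + 1) + gY ν Y t)
      = s ^ ν * (∑' n : ℕ, (1 / (s + 1)) ^ (ν - 1 + (n : ℝ)) * Y n)
        - s * Y 0 - ((1 - ν) * Y 0 + Y 1) := by
  obtain ⟨M, hM⟩ := hY
  have hM0 : 0 ≤ M := (abs_nonneg _).trans (hM 0)
  have hs1 : (0:ℝ) < s + 1 := by linarith
  set r : ℝ := 1 / (s + 1) with hr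
  have hr0 : 0 < r := by positivity
  have hr1 : r < 1 := by rw [hr, div_lt_one hs1]; linarith
  have hrs : r * (s + 1) = 1 := by rw [hr]; field_simp
  have hsr : 1 - r = s * r := by rw [hr]; field_simp; ring
  set G : ℕ → ℝ := gY ν Y with hGdef
  set f : ℕ → ℝ := fun k => cc ν k * r ^ k with hf
  set g : ℕ → ℝ := fun n => r ^ n * Y n with hg
  -- absolute summability
  have hfnorm : Summable fun k => ‖f k‖ := by
    apply Summable.of_nonneg_of_le (fun k => norm_nonneg _)
      (fun k => ?_) (summable_geometric_of_lt_one hr0.le hr1)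
    rw [hf, Real.norm_eq_abs, abs_mul, abs_of_pos (cc_pos hν2 k), abs_of_pos (pow_pos hr0 k)]
    calc cc ν k * r ^ k ≤ 1 * r ^ k :=
          mul_le_mul_of_nonneg_right (cc_le_one hν1 hν2 k) (pow_pos hr0 k).le
      _ = r ^ k := one_mul _
  have hgnorm : Summable fun n => ‖g n‖ := by
    apply Summable.of_nonneg_of_le (fun n => norm_nonneg _) (fun n => ?_)
      ((summable_geometric_of_lt_one hr0.le hr1).mul_left M)
    rw [hg, Real.norm_eq_abs, abs_mul, abs_of_pos (pow_pos hr0 n)]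
    calc r ^ n * |Y n| ≤ r ^ n * M := mul_le_mul_of_nonneg_left (hM n) (pow_pos hr0 n).le
      _ = M * r ^ n := mul_comm _ _
  -- the convolution identity
  have hconv : ∀ t : ℕ, ∑ k ∈ Finset.range (t + 1), f k * g (t - k) = r ^ t * G t := by
    intro t
    rw [hGdef, gY_eq_conv, Finset.mul_sum]
    rw [← Finset.sum_range_reflect (fun j => r ^ t * (cc ν (t - j) * Y j)) (t+1)]
    refine Finset.sum_congr rfl fun k hk => ?_
    have hkt : k ≤ t := Nat.lt_succ_iff.1 (Finset.mem_range.1 hk)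
    have h1 : t + 1 - 1 - k = t - k := by omega
    have h2 : t - (t - k) = k := Nat.sub_sub_self hkt
    rw [h1, h2, hf, hg]
    have : r ^ k * r ^ (t - k) = r ^ t := by
      rw [← pow_add]; congr 1; omega
    calc cc ν k * r ^ k * (r ^ (t-k) * Y (t-k))
        = (r ^ k * r ^ (t-k)) * (cc ν k * Y (t-k)) := by ring
      _ = r ^ t * (cc ν k * Y (t-k)) := by rw [this]
  -- summability of r^t * G t and value of its sum
  have hGsum : Summable fun t => r ^ t * G t := by
    refine ((summable_norm_sum_mul_range_of_summable_norm hfnorm hgnorm).of_norm).congr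
      fun t => ?_
    exact hconv t
  have hS : Summable g := hgnorm.of_norm
  set S : ℝ := ∑' n, g n with hSdef
  have hL : ∑' t, r ^ t * G t = (1 - r) ^ (ν - 2 : ℝ) * S := by
    have hcp := tsum_mul_tsum_eq_tsum_sum_range_of_summable_norm hfnorm hgnorm
    have hFr : ∑' k, f k = (1 - r) ^ (ν - 2 : ℝ) := (hasSum_cc hν1 hν2 hr0.le hr1).tsum_eq
    calc ∑' t, r ^ t * G t = ∑' t, ∑ k ∈ Finset.range (t+1), f k * g (t - k) :=
          tsum_congr fun t => (hconv t).symm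
      _ = (∑' k, f k) * ∑' n, g n := hcp.symm
      _ = (1 - r) ^ (ν - 2 : ℝ) * S := by rw [hFr, hSdef]
  -- shifted sums
  have hGsum1 : Summable fun t => r ^ t * G (t + 1) := by
    have h := (summable_nat_add_iff 1).2 hGsum
    refine (h.mul_left r⁻¹).congr fun t => ?_
    field_simp [pow_succ]
    ring
  have hGsum2 : Summable fun t => r ^ t * G (t + 2) := by
    have h := (summable_nat_add_iff 2).2 hGsum
    refine (h.mul_left (r⁻¹^2)).congr fun t => ?_
    field_simp [pow_add]
    ring
  set L : ℝ := ∑' t, r ^ t * G t with hLdef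
  set T1 : ℝ := ∑' t, r ^ t * G (t + 1) with hT1def
  set T2 : ℝ := ∑' t, r ^ t * G (t + 2) with hT2def
  have e1 : L = G 0 + r * T1 := by
    rw [hLdef, Summable.tsum_eq_zero_add hGsum]
    congr 1
    · simp
    · rw [hT1def, ← tsum_mul_left]
      exact tsum_congr fun t => by rw [pow_succ]; ring
  have e2 : T1 = G 1 + r * T2 := by
    rw [hT1def, Summable.tsum_eq_zero_add hGsum1]
    congr 1
    · simp
    · rw [hT2def, ← tsum_mul_left]
      exact tsum_congr fun t => by rw [pow_succ]; ring
  -- LHS decomposition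
  have hLHS : ∑' t : ℕ, r ^ (t + 1) * (G (t + 2) - 2 * G (t + 1) + G t)
      = r * T2 - 2 * r * T1 + r * L := by
    have hterm : ∀ t : ℕ, r ^ (t + 1) * (G (t + 2) - 2 * G (t + 1) + G t)
        = (r * (r ^ t * G (t+2)) - 2 * (r * (r ^ t * G (t+1)))) + r * (r ^ t * G t) := by
      intro t; rw [pow_succ]; ring
    rw [tsum_congr hterm, Summable.tsum_add (((hGsum2.mul_left r).sub ((hGsum1.mul_left r).mul_left 2)))
      (hGsum.mul_left r), Summable.tsum_sub (hGsum2.mul_left r) ((hGsum1.mul_left r).mul_left 2),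
      tsum_mul_left, tsum_mul_left, tsum_mul_left, tsum_mul_left]
    rw [hT2def, hT1def, hLdef]
    ring
  -- values of G 0, G 1
  have hG0 : G 0 = Y 0 := by
    rw [hGdef, gY_eq_conv]
    simp [cc_zero hν2]
  have hcc1 : cc ν 1 = 2 - ν := by
    have := cc_rec (ν := ν) hν2 0
    simpa [cc_zero hν2] using this
  have hG1 : G 1 = (2 - ν) * Y 0 + Y 1 := by
    rw [hGdef, gY_eq_conv]
    rw [Finset.sum_range_succ, Finset.sum_range_one]
    norm_num [hcc1, cc_zero hν2]
  -- rpow algebra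
  have hP : (1 - r) ^ (ν - 2 : ℝ) = s ^ (ν - 2 : ℝ) * r ^ (ν - 2 : ℝ) := by
    rw [hsr, Real.mul_rpow hs.le hr0.le]
  have hsν : s ^ (ν : ℝ) = s ^ (ν - 2 : ℝ) * s ^ 2 := by
    rw [← Real.rpow_natCast s 2, ← Real.rpow_add hs]
    norm_num
  have hrν : ∀ n : ℕ, r ^ (ν - 1 + (n : ℝ)) = (r ^ (ν - 2 : ℝ) * r) * r ^ n := by
    intro n
    rw [Real.rpow_add hr0, Real.rpow_natCast, show (ν - 1 : ℝ) = (ν - 2) + 1 by ring,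
      Real.rpow_add hr0, Real.rpow_one]
  -- RHS sum
  have hRHS : ∑' n : ℕ, r ^ (ν - 1 + (n : ℝ)) * Y n = (r ^ (ν - 2 : ℝ) * r) * S := by
    rw [hSdef, ← tsum_mul_left]
    refine tsum_congr fun n => ?_
    rw [hrν n, hg]
    ring
  -- put everything together
  rw [hLHS, hRHS, hsν]
  rw [hP] at hL
  rw [hG0] at e1
  rw [hG1] at e2
  have hrT1 : r * T1 = L - Y 0 := by linarith [e1]
  have hrT2 : r * T2 = T1 - ((2 - ν) * Y 0 + Y 1) := by linarith [e2]
  have hT1v : T1 = (s + 1) * (L - Y 0) := by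
    calc T1 = (r * (s + 1)) * T1 := by rw [hrs]; ring
      _ = (s + 1) * (r * T1) := by ring
      _ = (s + 1) * (L - Y 0) := by rw [hrT1]
  have hkey : s - 1 + r = s ^ 2 * r := by
    rw [hr]
    field_simp
    ring
  linear_combination hrT2 - 2 * hrT1 + hT1v + L * hkey + (s ^ 2 * r) * hL
end
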